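/- Let Φ be a unital positive linear map from B(𝓗) to B(𝓚), and A, B strictly positive operators with mA ≤ B ≤ MA for 0 < m < M, and p ≤ 0. Then Φ(A ♯_p B) ≤ C(m,M,p)·Φ(A) + Φ(A) ♯_p Φ(B), where C(m,M,p) = (M m^p - m M^p)/(M-m) + (p-1)·((M^p - m^p)/(p(M-m)))^(p/(p-1)) when m ≤ ((M^p - m^p)/(p(M-m)))^(1/(p-1)) ≤ M, and 0 otherwise. -/

import Mathlib

/-- The weighted geometric-type mean `A ♯_p B = A^(1/2) (A^(-1/2) B A^(-1/2))^p A^(1/2)`. -/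
noncomputable def sharpPow {H : Type*} [NormedAddCommGroup H] [InnerProductSpace ℂ H]
    [CompleteSpace H] (p : ℝ) (A B : H →L[ℂ] H) : H →L[ℂ] H :=
  cfc (fun t : ℝ => t ^ (1 / 2 : ℝ)) A *
    cfc (fun t : ℝ => t ^ p) (cfc (fun t : ℝ => t ^ (-(1 / 2) : ℝ)) A * B *
      cfc (fun t : ℝ => t ^ (-(1 / 2) : ℝ)) A) *
    cfc (fun t : ℝ => t ^ (1 / 2 : ℝ)) A

/-!
Sandwiching the functional calculus of `X = A^(-1/2) B A^(-1/2)`, whose spectrum lies in `[m, M]`,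
between two copies of `A^(1/2)` turns inequalities between real functions on `[m, M]` into
operator inequalities: `α + β x` becomes `α A + β B` and `x ^ p` becomes `A ♯_p B`.
For `p ≤ 0` the function `x ^ p` is convex, so it lies below its secant `α + β x` on `[m, M]`;
hence `A ♯_p B ≤ α A + β B`, and positivity of `Φ` gives `Φ (A ♯_p B) ≤ α Φ(A) + β Φ(B)`.
The secant exceeds `x ^ p` by at most `C(m, M, p)`, the maximum of the concave function
`α + β x - x ^ p`, attained where the tangent of `x ^ p` is parallel to the secant. Since
`m Φ(A) ≤ Φ(B) ≤ M Φ(A)`, the same transfer applied to `Φ(A)`, `Φ(B)` finishes the proof.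
-/

open Set

lemma ConvexOn.le_secant {s : Set ℝ} {f : ℝ → ℝ} (hf : ConvexOn ℝ s f) {m M x : ℝ}
    (hm : m ∈ s) (hM : M ∈ s) (hmM : m < M) (hx : x ∈ Icc m M) :
    f x ≤ (M * f m - m * f M) / (M - m) + (f M - f m) / (M - m) * x := by
  have hMm : 0 < M - m := sub_pos.2 hmM
  have hcomb : (M - x) / (M - m) * m + (x - m) / (M - m) * M = x := by
    field_simp; ring
  have := hf.2 hm hM (div_nonneg (sub_nonneg.2 hx.2) hMm.le)
    (div_nonneg (sub_nonneg.2 hx.1) hMm.le) (by field_simp; ring)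
  simp only [smul_eq_mul, hcomb] at this
  refine this.trans_eq ?_
  field_simp
  ring

namespace Real

lemma convexOn_rpow_of_nonpos {p : ℝ} (hp : p ≤ 0) : ConvexOn ℝ (Ioi 0) fun x : ℝ ↦ x ^ p := by
  refine MonotoneOn.convexOn_of_deriv (convex_Ioi 0)
    (continuousOn_id.rpow_const fun x hx ↦ Or.inl (ne_of_gt hx)) ?_ ?_ <;> rw [interior_Ioi]
  · exact fun x hx ↦ (differentiableAt_rpow_const_of_ne p (ne_of_gt hx)).differentiableWithinAt
  · intro x hx y _ hxy
    simp only [deriv_rpow_const]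
    exact mul_le_mul_of_nonpos_left (rpow_le_rpow_of_nonpos hx hxy (by linarith)) hp

lemma rpow_add_mul_sub_le_rpow {p : ℝ} (hp : p ≤ 0) {t x : ℝ} (ht : 0 < t) (hx : 0 < x) :
    t ^ p + p * t ^ (p - 1) * (x - t) ≤ x ^ p := by
  have hconv := convexOn_rpow_of_nonpos hp
  have hderiv : HasDerivAt (fun x : ℝ ↦ x ^ p) (p * t ^ (p - 1)) t :=
    hasDerivAt_rpow_const (Or.inl ht.ne')
  rcases lt_trichotomy t x with htx | rfl | hxt
  · have := hconv.le_slope_of_hasDerivAt ht hx htx hderiv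
    rw [slope_def_field, le_div_iff₀ (sub_pos.2 htx)] at this
    linarith
  · simp
  · have := hconv.slope_le_of_hasDerivAt hx ht hxt hderiv
    rw [slope_def_field, div_le_iff₀ (sub_pos.2 hxt)] at this
    nlinarith

lemma rpow_inv_mem_Icc {q m M y : ℝ} (hq : q < 0) (hm : 0 < m) (hmM : m ≤ M)
    (hy : y ∈ Icc (M ^ q) (m ^ q)) : y ^ q⁻¹ ∈ Icc m M := by
  have hyq : 0 < y := (rpow_pos_of_pos (hm.trans_le hmM) q).trans_le hy.1
  have hq' : q⁻¹ ≤ 0 := inv_nonpos.2 hq.le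
  constructor
  · simpa [hm.le, hq.ne] using rpow_le_rpow_of_nonpos hyq hy.2 hq'
  · simpa [(hm.trans_le hmM).le, hq.ne] using
      rpow_le_rpow_of_nonpos (rpow_pos_of_pos (hm.trans_le hmM) q) hy.1 hq'

lemma continuousOn_rpow_const_Icc {m M : ℝ} (hm : 0 < m) (p : ℝ) :
    ContinuousOn (fun x : ℝ ↦ x ^ p) (Icc m M) :=
  continuousOn_id.rpow_const fun _ hx ↦ Or.inl (hm.trans_le hx.1).ne'

lemma rpow_secant_slope_mem_Icc {p m M : ℝ} (hp : p < 0) (hm : 0 < m) (hmM : m < M) :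
    (M ^ p - m ^ p) / (p * (M - m)) ∈ Icc (M ^ (p - 1)) (m ^ (p - 1)) := by
  have hpMm : p * (M - m) < 0 := mul_neg_of_neg_of_pos hp (sub_pos.2 hmM)
  constructor
  · rw [le_div_iff_of_neg hpMm]
    nlinarith [rpow_add_mul_sub_le_rpow hp.le (hm.trans hmM) hm]
  · rw [div_le_iff_of_neg hpMm]
    nlinarith [rpow_add_mul_sub_le_rpow hp.le hm (hm.trans hmM)]

end Real

open Real

noncomputable def kantorovichDiffConst (m M p : ℝ) : ℝ :=
  if ((M ^ p - m ^ p) / (p * (M - m))) ^ (1 / (p - 1)) ∈ Set.Icc m M then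
    (M * m ^ p - m * M ^ p) / (M - m) +
      (p - 1) * ((M ^ p - m ^ p) / (p * (M - m))) ^ (p / (p - 1))
  else 0

lemma secant_le_kantorovichDiffConst_add_rpow {p m M x : ℝ} (hp : p ≤ 0) (hm : 0 < m)
    (hmM : m < M) (hx : x ∈ Icc m M) :
    (M * m ^ p - m * M ^ p) / (M - m) + (M ^ p - m ^ p) / (M - m) * x ≤
      kantorovichDiffConst m M p + x ^ p := by
  rcases hp.lt_or_eq with hneg | rfl
  · set y := (M ^ p - m ^ p) / (p * (M - m)) with hy_def
    have hy := rpow_secant_slope_mem_Icc hneg hm hmM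
    have hy0 : 0 < y := (rpow_pos_of_pos (hm.trans hmM) _).trans_le hy.1
    set t := y ^ (1 / (p - 1))
    have ht : t ∈ Icc m M := by
      simpa only [t, one_div] using rpow_inv_mem_Icc (by linarith) hm hmM.le hy
    have ht0 : 0 < t := hm.trans_le ht.1
    -- `t` is the point where the tangent of `x ↦ x ^ p` is parallel to the secant
    have hslope : p * t ^ (p - 1) = (M ^ p - m ^ p) / (M - m) := by
      rw [← rpow_mul hy0.le, one_div, inv_mul_cancel₀ (by linarith), rpow_one]
      rw [hy_def, ← mul_div_assoc, mul_div_mul_left _ _ hneg.ne]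
    have htp : t ^ p = y ^ (p / (p - 1)) := by
      rw [← rpow_mul hy0.le, one_div_mul_eq_div]
    have htt : t ^ (p - 1) * t = t ^ p := by
      rw [← rpow_add_one ht0.ne', sub_add_cancel]
    rw [kantorovichDiffConst, if_pos ht, ← htp, ← hslope]
    have := rpow_add_mul_sub_le_rpow hp ht0 (hm.trans_le hx.1)
    nlinarith
  · have hcond : ((M ^ (0:ℝ) - m ^ (0:ℝ)) / (0 * (M - m))) ^ (1 / ((0:ℝ) - 1)) ∉ Icc m M := by
      rw [rpow_zero, rpow_zero, sub_self, zero_mul, div_zero, zero_rpow (by norm_num)]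
      exact fun h ↦ hm.not_ge h.1
    rw [kantorovichDiffConst, if_neg hcond]
    simp [div_self (sub_pos.2 hmM).ne']

open CFC

section Conjugation

variable {𝒜 : Type*} [CStarAlgebra 𝒜] [PartialOrder 𝒜] [StarOrderedRing 𝒜] {a b : 𝒜}

lemma isSelfAdjoint_rpow_neg_half_mul_mul (hb : 0 ≤ b) :
    IsSelfAdjoint (a ^ (-(1 / 2) : ℝ) * b * a ^ (-(1 / 2) : ℝ)) :=
  (conjugate_nonneg_of_nonneg hb rpow_nonneg).isSelfAdjoint

lemma spectrum_rpow_neg_half_mul_mul_subset_Icc (ha : IsStrictlyPositive a) (hb : 0 ≤ b)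
    {m M : ℝ} (hmb : m • a ≤ b) (hbM : b ≤ M • a) :
    spectrum ℝ (a ^ (-(1 / 2) : ℝ) * b * a ^ (-(1 / 2) : ℝ)) ⊆ Icc m M := by
  have hc := isSelfAdjoint_rpow_neg_half_mul_mul (a := a) hb
  have hconj (r : ℝ) : a ^ (-(1 / 2) : ℝ) * (r • a) * a ^ (-(1 / 2) : ℝ) = algebraMap ℝ 𝒜 r := by
    rw [mul_smul_comm, smul_mul_assoc, conjugate_rpow_neg_one_half a ha,
      Algebra.algebraMap_eq_smul_one]
  intro x hx
  constructor
  · refine (algebraMap_le_iff_le_spectrum hc).1 ?_ x hx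
    rw [← hconj]
    exact conjugate_le_conjugate_of_nonneg hmb rpow_nonneg
  · refine (le_algebraMap_iff_spectrum_le hc).1 ?_ x hx
    rw [← hconj]
    exact conjugate_le_conjugate_of_nonneg hbM rpow_nonneg

lemma rpow_half_mul_cfc_const_add_mul_rpow_half (ha : 0 ≤ a) (hb : 0 ≤ b) (γ : ℝ) {f : ℝ → ℝ}
    (hf : ContinuousOn f (spectrum ℝ (a ^ (-(1 / 2) : ℝ) * b * a ^ (-(1 / 2) : ℝ)))) :
    a ^ (1 / 2 : ℝ) * cfc (fun x ↦ γ + f x) (a ^ (-(1 / 2) : ℝ) * b * a ^ (-(1 / 2) : ℝ)) *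
      a ^ (1 / 2 : ℝ) = γ • a + a ^ (1 / 2 : ℝ) *
        cfc f (a ^ (-(1 / 2) : ℝ) * b * a ^ (-(1 / 2) : ℝ)) * a ^ (1 / 2 : ℝ) := by
  rw [cfc_const_add γ f _ hf (isSelfAdjoint_rpow_neg_half_mul_mul hb),
    Algebra.algebraMap_eq_smul_one, mul_add, add_mul, mul_smul_one, smul_mul_assoc,
    ← CFC.sqrt_eq_rpow, sqrt_mul_sqrt_self a ha]

lemma rpow_half_mul_cfc_const_mul_mul_rpow_half (ha : IsStrictlyPositive a) (hb : 0 ≤ b) (β : ℝ) :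
    a ^ (1 / 2 : ℝ) * cfc (fun x ↦ β * x) (a ^ (-(1 / 2) : ℝ) * b * a ^ (-(1 / 2) : ℝ)) *
      a ^ (1 / 2 : ℝ) = β • b := by
  rw [cfc_const_mul_id β _ (isSelfAdjoint_rpow_neg_half_mul_mul hb), mul_smul_comm, smul_mul_assoc]
  congr 1
  simp only [← mul_assoc, rpow_mul_rpow_neg (1 / 2 : ℝ) ha, one_mul]
  rw [mul_assoc, rpow_neg_mul_rpow (1 / 2 : ℝ) ha, mul_one]

lemma rpow_half_mul_cfc_mul_rpow_half_mono (ha : IsStrictlyPositive a) (hb : 0 ≤ b)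
    {m M : ℝ} (hmb : m • a ≤ b) (hbM : b ≤ M • a) {f g : ℝ → ℝ} (hf : ContinuousOn f (Icc m M))
    (hg : ContinuousOn g (Icc m M)) (hfg : ∀ x ∈ Icc m M, f x ≤ g x) :
    a ^ (1 / 2 : ℝ) * cfc f (a ^ (-(1 / 2) : ℝ) * b * a ^ (-(1 / 2) : ℝ)) * a ^ (1 / 2 : ℝ) ≤
      a ^ (1 / 2 : ℝ) * cfc g (a ^ (-(1 / 2) : ℝ) * b * a ^ (-(1 / 2) : ℝ)) * a ^ (1 / 2 : ℝ) := by
  have hspec := spectrum_rpow_neg_half_mul_mul_subset_Icc ha hb hmb hbM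
  exact conjugate_le_conjugate_of_nonneg
    (cfc_mono (fun x hx ↦ hfg x (hspec hx)) (hf.mono hspec) (hg.mono hspec)) rpow_nonneg

end Conjugation

section SharpPow

variable {H : Type*} [NormedAddCommGroup H] [InnerProductSpace ℂ H] [CompleteSpace H]

lemma sharpPow_eq {A : H →L[ℂ] H} (hA : 0 ≤ A) (p : ℝ) (B : H →L[ℂ] H) :
    sharpPow p A B = A ^ (1 / 2 : ℝ) *
      cfc (fun t : ℝ ↦ t ^ p) (A ^ (-(1 / 2) : ℝ) * B * A ^ (-(1 / 2) : ℝ)) * A ^ (1 / 2 : ℝ) := by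
  simp only [sharpPow, rpow_eq_cfc_real hA]

lemma sharpPow_le_smul_add_smul {A B : H →L[ℂ] H} (hA : IsStrictlyPositive A) (hB : 0 ≤ B)
    {m M : ℝ} (hm : 0 < m) (hmB : m • A ≤ B) (hBM : B ≤ M • A) {p α β : ℝ}
    (h : ∀ x ∈ Icc m M, x ^ p ≤ α + β * x) :
    sharpPow p A B ≤ α • A + β • B := by
  rw [sharpPow_eq hA.nonneg, ← rpow_half_mul_cfc_const_mul_mul_rpow_half hA hB β,
    ← rpow_half_mul_cfc_const_add_mul_rpow_half hA.nonneg hB α (by fun_prop)]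
  exact rpow_half_mul_cfc_mul_rpow_half_mono hA hB hmB hBM
    (Real.continuousOn_rpow_const_Icc hm p) (by fun_prop) h

lemma smul_add_smul_le_smul_add_sharpPow {A B : H →L[ℂ] H} (hA : IsStrictlyPositive A)
    (hB : 0 ≤ B) {m M : ℝ} (hm : 0 < m) (hmB : m • A ≤ B) (hBM : B ≤ M • A) {p α β γ : ℝ}
    (h : ∀ x ∈ Icc m M, α + β * x ≤ γ + x ^ p) :
    α • A + β • B ≤ γ • A + sharpPow p A B := by
  have hspec := spectrum_rpow_neg_half_mul_mul_subset_Icc hA hB hmB hBM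
  rw [sharpPow_eq hA.nonneg, ← rpow_half_mul_cfc_const_mul_mul_rpow_half hA hB β,
    ← rpow_half_mul_cfc_const_add_mul_rpow_half hA.nonneg hB α (by fun_prop),
    ← rpow_half_mul_cfc_const_add_mul_rpow_half hA.nonneg hB γ
      ((Real.continuousOn_rpow_const_Icc hm p).mono hspec)]
  exact rpow_half_mul_cfc_mul_rpow_half_mono hA hB hmB hBM (by fun_prop)
    (continuousOn_const.add (Real.continuousOn_rpow_const_Icc hm p)) h

end SharpPow

lemma PositiveLinearMap.isStrictlyPositive_map {𝒜 ℬ : Type*}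
    [CStarAlgebra 𝒜] [PartialOrder 𝒜] [StarOrderedRing 𝒜]
    [CStarAlgebra ℬ] [PartialOrder ℬ] [StarOrderedRing ℬ]
    (Φ : 𝒜 →ₚ[ℂ] ℬ) (hΦ : Φ 1 = 1) {a : 𝒜} (ha : IsStrictlyPositive a) :
    IsStrictlyPositive (Φ a) := by
  nontriviality ℬ
  have : Nontrivial 𝒜 := ⟨1, 0, fun h ↦ one_ne_zero (by rw [← hΦ, h, map_zero])⟩
  obtain ⟨r, hr, hra⟩ :=
    (exists_pos_algebraMap_le_iff ha.isSelfAdjoint).2 fun x hx ↦ ha.spectrum_pos hx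
  refine (isStrictlyPositive_algebraMap hr).of_le ?_
  calc algebraMap ℝ ℬ r = Φ (algebraMap ℝ 𝒜 r) := by
        simp only [Algebra.algebraMap_eq_smul_one, map_smul_of_tower, hΦ]
    _ ≤ Φ a := OrderHomClass.mono Φ hra

theorem stmt_16_general {H K : Type*}
    [NormedAddCommGroup H] [InnerProductSpace ℂ H] [CompleteSpace H]
    [NormedAddCommGroup K] [InnerProductSpace ℂ K] [CompleteSpace K]
    (Φ : (H →L[ℂ] H) →ₗ[ℂ] (K →L[ℂ] K))
    (hΦpos : ∀ T : H →L[ℂ] H, 0 ≤ T → 0 ≤ Φ T) (hΦunital : Φ 1 = 1)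
    (A B : H →L[ℂ] H) (hA0 : 0 ≤ A) (hAu : IsUnit A) (hB0 : 0 ≤ B)
    (m M : ℝ) (hm : 0 < m) (hmM : m < M)
    (hmA : m • A ≤ B) (hBM : B ≤ M • A)
    (p : ℝ) (hp : p ≤ 0) (C : ℝ)
    (hC : C =
      if ((M ^ p - m ^ p) / (p * (M - m))) ^ (1 / (p - 1)) ∈ Set.Icc m M then
        (M * m ^ p - m * M ^ p) / (M - m) +
          (p - 1) * ((M ^ p - m ^ p) / (p * (M - m))) ^ (p / (p - 1))
      else 0) :
    Φ (sharpPow p A B) ≤ C • Φ A + sharpPow p (Φ A) (Φ B) := by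
  subst hC
  have hA : IsStrictlyPositive A := IsStrictlyPositive.iff_of_unital.2 ⟨hA0, hAu⟩
  have hΦmono : Monotone Φ := OrderHomClass.mono (PositiveLinearMap.mk₀ Φ hΦpos)
  have hΦA : IsStrictlyPositive (Φ A) :=
    (PositiveLinearMap.mk₀ Φ hΦpos).isStrictlyPositive_map hΦunital hA
  have hmΦ : m • Φ A ≤ Φ B := by simpa only [Φ.map_smul_of_tower] using hΦmono hmA
  have hΦM : Φ B ≤ M • Φ A := by simpa only [Φ.map_smul_of_tower] using hΦmono hBM
  set α := (M * m ^ p - m * M ^ p) / (M - m)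
  set β := (M ^ p - m ^ p) / (M - m)
  calc Φ (sharpPow p A B) ≤ Φ (α • A + β • B) :=
        hΦmono <| sharpPow_le_smul_add_smul hA hB0 hm hmA hBM fun x hx ↦
          (Real.convexOn_rpow_of_nonpos hp).le_secant hm (hm.trans hmM) hmM hx
    _ = α • Φ A + β • Φ B := by rw [map_add, Φ.map_smul_of_tower, Φ.map_smul_of_tower]
    _ ≤ kantorovichDiffConst m M p • Φ A + sharpPow p (Φ A) (Φ B) :=
        smul_add_smul_le_smul_add_sharpPow hΦA (hΦpos B hB0) hm hmΦ hΦM fun _ hx ↦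
          secant_le_kantorovichDiffConst_add_rpow hp hm hmM hx

/-- Difference-type reverse of `Φ(A) ♯_p Φ(B) ≤ Φ(A ♯_p B)` for `p ≤ 0`. -/
theorem stmt_16 {H K : Type*}
    [NormedAddCommGroup H] [InnerProductSpace ℂ H] [CompleteSpace H]
    [NormedAddCommGroup K] [InnerProductSpace ℂ K] [CompleteSpace K]
    (Φ : (H →L[ℂ] H) →ₗ[ℂ] (K →L[ℂ] K))
    (hΦpos : ∀ T : H →L[ℂ] H, 0 ≤ T → 0 ≤ Φ T) (hΦunital : Φ 1 = 1)
    (A B : H →L[ℂ] H) (hA0 : 0 ≤ A) (hAu : IsUnit A) (hB0 : 0 ≤ B) (hBu : IsUnit B)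
    (m M : ℝ) (hm : 0 < m) (hmM : m < M)
    (hmA : m • A ≤ B) (hBM : B ≤ M • A)
    (p : ℝ) (hp : p ≤ 0) (C : ℝ)
    (hC : C =
      if ((M ^ p - m ^ p) / (p * (M - m))) ^ (1 / (p - 1)) ∈ Set.Icc m M then
        (M * m ^ p - m * M ^ p) / (M - m) +
          (p - 1) * ((M ^ p - m ^ p) / (p * (M - m))) ^ (p / (p - 1))
      else 0) :
    Φ (sharpPow p A B) ≤ C • Φ A + sharpPow p (Φ A) (Φ B) :=
  stmt_16_general Φ hΦpos hΦunital A B hA0 hAu hB0 m M hm hmM hmA hBM p hp C hC
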